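/- arXiv:2211.11665 — 4 statements merged into one kernel-verified Lean document; each statement's English description precedes it below -/
import Mathlib

section
/- Let M be a set of Borel probability measures on ℝⁿ, let D be a metric on M, and let G be a group (under composition) of Borel-measurable bijections of ℝⁿ such that M is closed under pushforward by every T ∈ G and D(P ∘ T⁻¹, R ∘ T⁻¹) = D(P, R) for all P, R ∈ M and T ∈ G (G is a group of isometries of D). Let Z be a measurable space with probability measure Q, and consider maps F_i, F_j, F_k : Z → M such that for each T ∈ G the function z ↦ D²(F_i(z), F_j(z) ∘ T⁻¹) is Q-integrable (and similarly for the other pairs), and such that the infimum over T ∈ G of ∫ D²(F_i(z), F_j(z) ∘ T⁻¹) dQ(z) is attained. Then d(F_i, F_j) := min_{T ∈ G} (∫ D²(F_i(z), F_j(z) ∘ T⁻¹) dQ(z))^{1/2} satisfies: (i) d(F_i, F_j) = d(F_j, F_i); (ii) d(F_i, F_k) ≤ d(F_i, F_j) + d(F_j, F_k); and (iii) d(F_i, F_j) = 0 if and only if there exists T ∈ G such that F_i(z) = F_j(z) ∘ T⁻¹ for Q-almost every z. -/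
/-!
Because `G` acts by isometries, `D(P, T R) = D(R, T⁻¹ P)`, so the alignment costs of `(F, F')`
over `G` are those of `(F', F)`, which gives symmetry. For the triangle inequality, let `T₁`
align `F₂` to `F₁` and `T₂` align `F₃` to `F₂` optimally. Pointwise,
`D(F₁, T₁T₂ F₃) ≤ D(F₁, T₁ F₂) + D(F₂, T₂ F₃)`, and Minkowski's inequality in `L²(Q)` turns this
into `d(F₁, F₃) ≤ d(F₁, F₂) + d(F₂, F₃)`. Finally `d(F, F') = 0` says that an optimal
alignment has zero cost, i.e. `D` vanishes `Q`-a.e. along it.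
-/

open MeasureTheory

section Minkowski

variable {Z : Type*} [MeasurableSpace Z] {Q : Measure Z}

lemma eLpNorm_two_eq_ofReal_sqrt_integral_sq {f : Z → ℝ} (hf : MemLp f 2 Q) :
    eLpNorm f 2 Q = ENNReal.ofReal √(∫ z, f z ^ 2 ∂Q) := by
  rw [hf.eLpNorm_eq_integral_rpow_norm two_ne_zero ENNReal.ofNat_ne_top, Real.sqrt_eq_rpow]
  simp

lemma sqrt_integral_add_sq_le {a b : Z → ℝ} (ha : MemLp a 2 Q) (hb : MemLp b 2 Q) :
    √(∫ z, (a z + b z) ^ 2 ∂Q) ≤ √(∫ z, a z ^ 2 ∂Q) + √(∫ z, b z ^ 2 ∂Q) := by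
  have h := eLpNorm_add_le ha.1 hb.1 one_le_two
  rwa [eLpNorm_two_eq_ofReal_sqrt_integral_sq ha, eLpNorm_two_eq_ofReal_sqrt_integral_sq hb,
    eLpNorm_two_eq_ofReal_sqrt_integral_sq (ha.add hb),
    ← ENNReal.ofReal_add (by positivity) (by positivity),
    ENNReal.ofReal_le_ofReal_iff (by positivity)] at h

lemma memLp_two_of_nonneg_of_integrable_sq {f : Z → ℝ} (h0 : ∀ z, 0 ≤ f z)
    (hf : Integrable (fun z => f z ^ 2) Q) : MemLp f 2 Q := by
  have hmeas : AEStronglyMeasurable f Q := by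
    simpa [Real.sqrt_sq (h0 _)] using Real.continuous_sqrt.comp_aestronglyMeasurable hf.1
  exact (memLp_two_iff_integrable_sq hmeas).2 hf

end Minkowski

section ShapeDistance

variable {α Z : Type*} [MeasurableSpace α] [MeasurableSpace Z] {Q : Measure Z}
  {M : Set (Measure α)} {D : Measure α → Measure α → ℝ} {G : Set (α ≃ᵐ α)}

variable (Q D) in
noncomputable def alignCost (F F' : Z → Measure α) (T : α ≃ᵐ α) : ℝ :=
  ∫ z, D (F z) (Measure.map T (F' z)) ^ 2 ∂Q

variable (Q D G) in
noncomputable def shapeDist (F F' : Z → Measure α) : ℝ :=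
  √(sInf {r : ℝ | ∃ T ∈ G, r = alignCost Q D F F' T})

lemma alignCost_nonneg (F F' : Z → Measure α) (T : α ≃ᵐ α) : 0 ≤ alignCost Q D F F' T :=
  integral_nonneg fun _ => sq_nonneg _

lemma shapeDist_le_sqrt_alignCost {F F' : Z → Measure α} {T : α ≃ᵐ α} (hT : T ∈ G) :
    shapeDist Q D G F F' ≤ √(alignCost Q D F F' T) := by
  refine Real.sqrt_le_sqrt (csInf_le ⟨0, ?_⟩ ⟨T, hT, rfl⟩)
  rintro r ⟨T', -, rfl⟩
  exact alignCost_nonneg F F' T'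

lemma shapeDist_eq_sqrt_alignCost {F F' : Z → Measure α} {T : α ≃ᵐ α} (hT : T ∈ G)
    (hmin : IsMinOn (alignCost Q D F F') G T) :
    shapeDist Q D G F F' = √(alignCost Q D F F' T) := by
  have hleast : IsLeast {r : ℝ | ∃ T ∈ G, r = alignCost Q D F F' T} (alignCost Q D F F' T) := by
    refine ⟨⟨T, hT, rfl⟩, ?_⟩
    rintro r ⟨T', hT', rfl⟩
    exact hmin hT'
  rw [shapeDist, hleast.csInf_eq]

lemma dist_map_eq_dist_map_symm
    (hD_symm : ∀ P ∈ M, ∀ R ∈ M, D P R = D R P)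
    (hG_inv : ∀ T ∈ G, T.symm ∈ G)
    (hG_closed : ∀ P ∈ M, ∀ T ∈ G, Measure.map T P ∈ M)
    (hG_iso : ∀ P ∈ M, ∀ R ∈ M, ∀ T ∈ G, D (Measure.map T P) (Measure.map T R) = D P R)
    {P R : Measure α} (hP : P ∈ M) (hR : R ∈ M) {T : α ≃ᵐ α} (hT : T ∈ G) :
    D P (Measure.map T R) = D R (Measure.map T.symm P) := by
  calc D P (Measure.map T R)
      = D (Measure.map T R) (Measure.map T (Measure.map T.symm P)) := by
        rw [MeasurableEquiv.map_map_symm, hD_symm _ hP _ (hG_closed _ hR _ hT)]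
    _ = D R (Measure.map T.symm P) := hG_iso _ hR _ (hG_closed _ hP _ (hG_inv T hT)) T hT

lemma alignCost_eq_alignCost_symm
    (hD_symm : ∀ P ∈ M, ∀ R ∈ M, D P R = D R P)
    (hG_inv : ∀ T ∈ G, T.symm ∈ G)
    (hG_closed : ∀ P ∈ M, ∀ T ∈ G, Measure.map T P ∈ M)
    (hG_iso : ∀ P ∈ M, ∀ R ∈ M, ∀ T ∈ G, D (Measure.map T P) (Measure.map T R) = D P R)
    {F F' : Z → Measure α} (hF : ∀ z, F z ∈ M) (hF' : ∀ z, F' z ∈ M) {T : α ≃ᵐ α} (hT : T ∈ G) :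
    alignCost Q D F F' T = alignCost Q D F' F T.symm :=
  integral_congr_ae <| .of_forall fun z => by
    simp only [dist_map_eq_dist_map_symm hD_symm hG_inv hG_closed hG_iso (hF z) (hF' z) hT]

lemma shapeDist_comm
    (hD_symm : ∀ P ∈ M, ∀ R ∈ M, D P R = D R P)
    (hG_inv : ∀ T ∈ G, T.symm ∈ G)
    (hG_closed : ∀ P ∈ M, ∀ T ∈ G, Measure.map T P ∈ M)
    (hG_iso : ∀ P ∈ M, ∀ R ∈ M, ∀ T ∈ G, D (Measure.map T P) (Measure.map T R) = D P R)
    {F F' : Z → Measure α} (hF : ∀ z, F z ∈ M) (hF' : ∀ z, F' z ∈ M) :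
    shapeDist Q D G F F' = shapeDist Q D G F' F := by
  unfold shapeDist
  congr 2
  ext r
  constructor
  · rintro ⟨T, hT, rfl⟩
    exact ⟨T.symm, hG_inv T hT,
      alignCost_eq_alignCost_symm hD_symm hG_inv hG_closed hG_iso hF hF' hT⟩
  · rintro ⟨T, hT, rfl⟩
    exact ⟨T.symm, hG_inv T hT,
      alignCost_eq_alignCost_symm hD_symm hG_inv hG_closed hG_iso hF' hF hT⟩

lemma dist_map_trans_le
    (hD_tri : ∀ P ∈ M, ∀ R ∈ M, ∀ S ∈ M, D P S ≤ D P R + D R S)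
    (hG_closed : ∀ P ∈ M, ∀ T ∈ G, Measure.map T P ∈ M)
    (hG_iso : ∀ P ∈ M, ∀ R ∈ M, ∀ T ∈ G, D (Measure.map T P) (Measure.map T R) = D P R)
    {P R S : Measure α} (hP : P ∈ M) (hR : R ∈ M) (hS : S ∈ M)
    {T₁ T₂ : α ≃ᵐ α} (hT₁ : T₁ ∈ G) (hT₂ : T₂ ∈ G) :
    D P (Measure.map (T₂.trans T₁) S) ≤ D P (Measure.map T₁ R) + D R (Measure.map T₂ S) := by
  have hS₂ := hG_closed _ hS _ hT₂
  rw [MeasurableEquiv.coe_trans, ← Measure.map_map T₁.measurable T₂.measurable,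
    ← hG_iso _ hR _ hS₂ _ hT₁]
  exact hD_tri _ hP _ (hG_closed _ hR _ hT₁) _ (hG_closed _ hS₂ _ hT₁)

lemma shapeDist_le_sqrt_alignCost_add_sqrt_alignCost
    (hD_nonneg : ∀ P ∈ M, ∀ R ∈ M, 0 ≤ D P R)
    (hD_tri : ∀ P ∈ M, ∀ R ∈ M, ∀ S ∈ M, D P S ≤ D P R + D R S)
    (hG_mul : ∀ T₁ ∈ G, ∀ T₂ ∈ G, T₁.trans T₂ ∈ G)
    (hG_closed : ∀ P ∈ M, ∀ T ∈ G, Measure.map T P ∈ M)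
    (hG_iso : ∀ P ∈ M, ∀ R ∈ M, ∀ T ∈ G, D (Measure.map T P) (Measure.map T R) = D P R)
    {F₁ F₂ F₃ : Z → Measure α} (hF₁ : ∀ z, F₁ z ∈ M) (hF₂ : ∀ z, F₂ z ∈ M)
    (hF₃ : ∀ z, F₃ z ∈ M) {T₁ T₂ : α ≃ᵐ α} (hT₁ : T₁ ∈ G) (hT₂ : T₂ ∈ G)
    (hint₁ : Integrable (fun z => D (F₁ z) (Measure.map T₁ (F₂ z)) ^ 2) Q)
    (hint₂ : Integrable (fun z => D (F₂ z) (Measure.map T₂ (F₃ z)) ^ 2) Q) :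
    shapeDist Q D G F₁ F₃ ≤ √(alignCost Q D F₁ F₂ T₁) + √(alignCost Q D F₂ F₃ T₂) := by
  set a := fun z => D (F₁ z) (Measure.map T₁ (F₂ z))
  set b := fun z => D (F₂ z) (Measure.map T₂ (F₃ z))
  have ha : MemLp a 2 Q :=
    memLp_two_of_nonneg_of_integrable_sq
      (fun z => hD_nonneg _ (hF₁ z) _ (hG_closed _ (hF₂ z) _ hT₁)) hint₁
  have hb : MemLp b 2 Q :=
    memLp_two_of_nonneg_of_integrable_sq
      (fun z => hD_nonneg _ (hF₂ z) _ (hG_closed _ (hF₃ z) _ hT₂)) hint₂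
  have hpoint : ∀ z, D (F₁ z) (Measure.map (T₂.trans T₁) (F₃ z)) ^ 2 ≤ (a z + b z) ^ 2 := fun z =>
    pow_le_pow_left₀ (hD_nonneg _ (hF₁ z) _ (hG_closed _ (hF₃ z) _ (hG_mul _ hT₂ _ hT₁)))
      (dist_map_trans_le hD_tri hG_closed hG_iso (hF₁ z) (hF₂ z) (hF₃ z) hT₁ hT₂) 2
  calc shapeDist Q D G F₁ F₃ ≤ √(alignCost Q D F₁ F₃ (T₂.trans T₁)) :=
        shapeDist_le_sqrt_alignCost (hG_mul _ hT₂ _ hT₁)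
    _ ≤ √(∫ z, (a z + b z) ^ 2 ∂Q) := Real.sqrt_le_sqrt <|
        integral_mono_of_nonneg (.of_forall fun _ => sq_nonneg _) (ha.add hb).integrable_sq
          (.of_forall hpoint)
    _ ≤ √(alignCost Q D F₁ F₂ T₁) + √(alignCost Q D F₂ F₃ T₂) := sqrt_integral_add_sq_le ha hb

lemma alignCost_eq_zero_iff
    (hD_eq_zero : ∀ P ∈ M, ∀ R ∈ M, (D P R = 0 ↔ P = R))
    (hG_closed : ∀ P ∈ M, ∀ T ∈ G, Measure.map T P ∈ M)
    {F F' : Z → Measure α} (hF : ∀ z, F z ∈ M) (hF' : ∀ z, F' z ∈ M) {T : α ≃ᵐ α} (hT : T ∈ G)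
    (hint : Integrable (fun z => D (F z) (Measure.map T (F' z)) ^ 2) Q) :
    alignCost Q D F F' T = 0 ↔ ∀ᵐ z ∂Q, F z = Measure.map T (F' z) := by
  rw [alignCost, integral_eq_zero_iff_of_nonneg (fun _ => sq_nonneg _) hint]
  refine Filter.eventually_congr (.of_forall fun z => ?_)
  rw [Pi.zero_apply, sq_eq_zero_iff, hD_eq_zero _ (hF z) _ (hG_closed _ (hF' z) _ hT)]

lemma shapeDist_eq_zero_iff
    (hD_eq_zero : ∀ P ∈ M, ∀ R ∈ M, (D P R = 0 ↔ P = R))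
    (hG_closed : ∀ P ∈ M, ∀ T ∈ G, Measure.map T P ∈ M)
    {F F' : Z → Measure α} (hF : ∀ z, F z ∈ M) (hF' : ∀ z, F' z ∈ M)
    (hint : ∀ T ∈ G, Integrable (fun z => D (F z) (Measure.map T (F' z)) ^ 2) Q)
    (hattained : ∃ T ∈ G, IsMinOn (alignCost Q D F F') G T) :
    shapeDist Q D G F F' = 0 ↔ ∃ T ∈ G, ∀ᵐ z ∂Q, F z = Measure.map T (F' z) := by
  obtain ⟨T₀, hT₀, hmin⟩ := hattained
  have hzero := fun {T} (hT : T ∈ G) =>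
    alignCost_eq_zero_iff hD_eq_zero hG_closed hF hF' hT (hint T hT)
  rw [shapeDist_eq_sqrt_alignCost hT₀ hmin, Real.sqrt_eq_zero (alignCost_nonneg F F' T₀)]
  constructor
  · exact fun h => ⟨T₀, hT₀, (hzero hT₀).1 h⟩
  · rintro ⟨T, hT, hae⟩
    exact le_antisymm ((hmin hT).trans ((hzero hT).2 hae).le) (alignCost_nonneg F F' T₀)

end ShapeDistance

theorem stmt2_general {n : ℕ} {Z : Type*} [MeasurableSpace Z]
    (Q : Measure Z)
    (M : Set (Measure (Fin n → ℝ)))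
    (D : Measure (Fin n → ℝ) → Measure (Fin n → ℝ) → ℝ)
    -- `D` is a metric on `M`
    (hD_nonneg : ∀ P ∈ M, ∀ R ∈ M, 0 ≤ D P R)
    (hD_eq_zero : ∀ P ∈ M, ∀ R ∈ M, (D P R = 0 ↔ P = R))
    (hD_symm : ∀ P ∈ M, ∀ R ∈ M, D P R = D R P)
    (hD_tri : ∀ P ∈ M, ∀ R ∈ M, ∀ S ∈ M, D P S ≤ D P R + D R S)
    -- `G` is a group (under composition) of measurable bijections of `ℝⁿ`
    (G : Set ((Fin n → ℝ) ≃ᵐ (Fin n → ℝ)))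
    (hG_mul : ∀ T₁ ∈ G, ∀ T₂ ∈ G, T₁.trans T₂ ∈ G)
    (hG_inv : ∀ T ∈ G, T.symm ∈ G)
    -- `M` is closed under pushforward by every `T ∈ G`, and `G` acts by isometries of `D`
    (hG_closed : ∀ P ∈ M, ∀ T ∈ G, Measure.map T P ∈ M)
    (hG_iso : ∀ P ∈ M, ∀ R ∈ M, ∀ T ∈ G,
      D (Measure.map T P) (Measure.map T R) = D P R)
    -- the three stochastic networks
    (Fi Fj Fk : Z → Measure (Fin n → ℝ))
    (hFi : ∀ z, Fi z ∈ M) (hFj : ∀ z, Fj z ∈ M) (hFk : ∀ z, Fk z ∈ M)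
    -- integrability of the squared ground metric, for every alignment `T ∈ G`
    (hInt : ∀ F ∈ ({Fi, Fj, Fk} : Set (Z → Measure (Fin n → ℝ))),
      ∀ F' ∈ ({Fi, Fj, Fk} : Set (Z → Measure (Fin n → ℝ))), ∀ T ∈ G,
        Integrable (fun z => D (F z) (Measure.map T (F' z)) ^ 2) Q)
    -- the infimum over `T ∈ G` is attained for each relevant pair
    (hattained : ∀ F ∈ ({Fi, Fj, Fk} : Set (Z → Measure (Fin n → ℝ))),
      ∀ F' ∈ ({Fi, Fj, Fk} : Set (Z → Measure (Fin n → ℝ))),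
        ∃ T ∈ G, ∀ T' ∈ G,
          (∫ z, D (F z) (Measure.map T (F' z)) ^ 2 ∂Q) ≤
          (∫ z, D (F z) (Measure.map T' (F' z)) ^ 2 ∂Q))
    -- the stochastic shape distance
    (d : (Z → Measure (Fin n → ℝ)) → (Z → Measure (Fin n → ℝ)) → ℝ)
    (hd : ∀ F F' : Z → Measure (Fin n → ℝ), d F F' =
      Real.sqrt (sInf {r : ℝ | ∃ T ∈ G,
        r = ∫ z, D (F z) (Measure.map T (F' z)) ^ 2 ∂Q})) :
    d Fi Fj = d Fj Fi ∧
    d Fi Fk ≤ d Fi Fj + d Fj Fk ∧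
    (d Fi Fj = 0 ↔ ∃ T ∈ G, ∀ᵐ z ∂Q, Fi z = Measure.map T (Fj z)) := by
  obtain rfl : d = shapeDist Q D G := funext fun F => funext (hd F)
  have hij := hInt Fi (by simp) Fj (by simp)
  have hjk := hInt Fj (by simp) Fk (by simp)
  obtain ⟨T₁, hT₁, hmin₁⟩ : ∃ T ∈ G, IsMinOn (alignCost Q D Fi Fj) G T :=
    hattained Fi (by simp) Fj (by simp)
  obtain ⟨T₂, hT₂, hmin₂⟩ : ∃ T ∈ G, IsMinOn (alignCost Q D Fj Fk) G T :=
    hattained Fj (by simp) Fk (by simp)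
  refine ⟨shapeDist_comm hD_symm hG_inv hG_closed hG_iso hFi hFj, ?_,
    shapeDist_eq_zero_iff hD_eq_zero hG_closed hFi hFj hij ⟨T₁, hT₁, hmin₁⟩⟩
  rw [shapeDist_eq_sqrt_alignCost hT₁ hmin₁, shapeDist_eq_sqrt_alignCost hT₂ hmin₂]
  exact shapeDist_le_sqrt_alignCost_add_sqrt_alignCost hD_nonneg hD_tri hG_mul hG_closed hG_iso
    hFi hFj hFk hT₁ hT₂ (hij T₁ hT₁) (hjk T₂ hT₂)

/-- Stochastic shape distances built from a ground metric `D` on a set `M` of Borel probability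
measures on `ℝⁿ` and a group `G` of measurable bijections acting isometrically by pushforward:
symmetry, triangle inequality, and `d = 0` iff the two stochastic representations agree up to
some `T ∈ G`, `Q`-almost everywhere. -/
theorem stmt2 {n : ℕ} {Z : Type*} [MeasurableSpace Z]
    (Q : Measure Z) [IsProbabilityMeasure Q]
    (M : Set (Measure (Fin n → ℝ)))
    (hM : ∀ P ∈ M, IsProbabilityMeasure P)
    (D : Measure (Fin n → ℝ) → Measure (Fin n → ℝ) → ℝ)
    -- `D` is a metric on `M`
    (hD_nonneg : ∀ P ∈ M, ∀ R ∈ M, 0 ≤ D P R)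
    (hD_eq_zero : ∀ P ∈ M, ∀ R ∈ M, (D P R = 0 ↔ P = R))
    (hD_symm : ∀ P ∈ M, ∀ R ∈ M, D P R = D R P)
    (hD_tri : ∀ P ∈ M, ∀ R ∈ M, ∀ S ∈ M, D P S ≤ D P R + D R S)
    -- `G` is a group (under composition) of measurable bijections of `ℝⁿ`
    (G : Set ((Fin n → ℝ) ≃ᵐ (Fin n → ℝ)))
    (hG_one : MeasurableEquiv.refl (Fin n → ℝ) ∈ G)
    (hG_mul : ∀ T₁ ∈ G, ∀ T₂ ∈ G, T₁.trans T₂ ∈ G)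
    (hG_inv : ∀ T ∈ G, T.symm ∈ G)
    -- `M` is closed under pushforward by every `T ∈ G`, and `G` acts by isometries of `D`
    (hG_closed : ∀ P ∈ M, ∀ T ∈ G, Measure.map T P ∈ M)
    (hG_iso : ∀ P ∈ M, ∀ R ∈ M, ∀ T ∈ G,
      D (Measure.map T P) (Measure.map T R) = D P R)
    -- the three stochastic networks
    (Fi Fj Fk : Z → Measure (Fin n → ℝ))
    (hFi : ∀ z, Fi z ∈ M) (hFj : ∀ z, Fj z ∈ M) (hFk : ∀ z, Fk z ∈ M)
    -- integrability of the squared ground metric, for every alignment `T ∈ G`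
    (hInt : ∀ F ∈ ({Fi, Fj, Fk} : Set (Z → Measure (Fin n → ℝ))),
      ∀ F' ∈ ({Fi, Fj, Fk} : Set (Z → Measure (Fin n → ℝ))), ∀ T ∈ G,
        Integrable (fun z => D (F z) (Measure.map T (F' z)) ^ 2) Q)
    -- the infimum over `T ∈ G` is attained for each relevant pair
    (hattained : ∀ F ∈ ({Fi, Fj, Fk} : Set (Z → Measure (Fin n → ℝ))),
      ∀ F' ∈ ({Fi, Fj, Fk} : Set (Z → Measure (Fin n → ℝ))),
        ∃ T ∈ G, ∀ T' ∈ G,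
          (∫ z, D (F z) (Measure.map T (F' z)) ^ 2 ∂Q) ≤
          (∫ z, D (F z) (Measure.map T' (F' z)) ^ 2 ∂Q))
    -- the stochastic shape distance
    (d : (Z → Measure (Fin n → ℝ)) → (Z → Measure (Fin n → ℝ)) → ℝ)
    (hd : ∀ F F' : Z → Measure (Fin n → ℝ), d F F' =
      Real.sqrt (sInf {r : ℝ | ∃ T ∈ G,
        r = ∫ z, D (F z) (Measure.map T (F' z)) ^ 2 ∂Q})) :
    d Fi Fj = d Fj Fi ∧
    d Fi Fk ≤ d Fi Fj + d Fj Fk ∧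
    (d Fi Fj = 0 ↔ ∃ T ∈ G, ∀ᵐ z ∂Q, Fi z = Measure.map T (Fj z)) :=
  stmt2_general Q M D hD_nonneg hD_eq_zero hD_symm hD_tri G hG_mul hG_inv hG_closed hG_iso Fi Fj Fk
    hFi hFj hFk hInt hattained d hd
end

section
/- For n × n real positive definite matrices, the Bures distance B(A, C) := inf over orthogonal matrices U ∈ O(n) of the Frobenius norm ‖A^{1/2} − C^{1/2} U‖_F (where M^{1/2} denotes the positive semidefinite square root of M) is a metric on the set of n × n real positive definite matrices: it is symmetric, satisfies the triangle inequality, and B(A, C) = 0 if and only if A = C. -/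
/-!
Right multiplication by an orthogonal matrix is an isometry for the Frobenius norm, and `O(n)`
is compact, so the infimum defining `B(A, C)` is attained. Composing minimisers `U` for
`(A, C)` and `V` for `(C, E)` gives the triangle inequality through `‖√A − √E V U‖`, and
transposing a minimiser gives symmetry. If `B(A, C) = 0` then `√A = √C U`, whence
`A = √A √Aᵀ = √C U Uᵀ √C = C`.
-/

open Matrix
open scoped Classical

noncomputable def matSqrt {n : ℕ} (A : Matrix (Fin n) (Fin n) ℝ) :
    Matrix (Fin n) (Fin n) ℝ :=
  if hA : A.PosSemidef then
    (hA.1.eigenvectorUnitary : Matrix (Fin n) (Fin n) ℝ) *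
      diagonal ((↑) ∘ (Real.sqrt ·) ∘ hA.1.eigenvalues) *
      (star hA.1.eigenvectorUnitary : Matrix (Fin n) (Fin n) ℝ)
  else 0

noncomputable def frobNorm {n : ℕ} (M : Matrix (Fin n) (Fin n) ℝ) : ℝ :=
  Real.sqrt (Mᵀ * M).trace

noncomputable def buresDist {n : ℕ} (A C : Matrix (Fin n) (Fin n) ℝ) : ℝ :=
  sInf {r : ℝ | ∃ U ∈ Matrix.orthogonalGroup (Fin n) ℝ,
    r = frobNorm (matSqrt A - matSqrt C * U)}

open scoped Matrix.Norms.Frobenius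

section
variable {ι 𝕜 : Type*} [Fintype ι] [DecidableEq ι] [RCLike 𝕜]

lemma Matrix.isCompact_unitaryGroup :
    IsCompact (unitaryGroup ι 𝕜 : Set (Matrix ι ι 𝕜)) :=
  (isCompact_univ_pi fun _ => isCompact_univ_pi fun _ => isCompact_closedBall (0 : 𝕜) 1)
    |>.of_isClosed_subset (isClosed_unitary (R := Matrix ι ι 𝕜)) fun _ hU i _ j _ => by
      simpa using entry_norm_bound_of_unitary hU i j

lemma Matrix.transpose_mem_orthogonalGroup {U : Matrix ι ι ℝ}
    (hU : U ∈ orthogonalGroup ι ℝ) : Uᵀ ∈ orthogonalGroup ι ℝ := by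
  rw [mem_orthogonalGroup_iff, transpose_transpose]
  exact (mem_orthogonalGroup_iff' ι ℝ).1 hU

end

section
variable {n : ℕ}

lemma frobNorm_eq_norm (M : Matrix (Fin n) (Fin n) ℝ) : frobNorm M = ‖M‖ := by
  rw [frobNorm, frobenius_norm_def, ← Real.sqrt_eq_rpow, trace, Finset.sum_comm]
  simp [mul_apply, sq]

lemma frobNorm_mul_orthogonal (M : Matrix (Fin n) (Fin n) ℝ) {U : Matrix (Fin n) (Fin n) ℝ}
    (hU : U ∈ orthogonalGroup (Fin n) ℝ) : frobNorm (M * U) = frobNorm M := by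
  rw [frobNorm, frobNorm, transpose_mul, Matrix.mul_assoc, trace_mul_comm, Matrix.mul_assoc,
    Matrix.mul_assoc, (mem_orthogonalGroup_iff _ ℝ).1 hU, Matrix.mul_one]

lemma transpose_matSqrt (A : Matrix (Fin n) (Fin n) ℝ) : (matSqrt A)ᵀ = matSqrt A := by
  unfold matSqrt
  split_ifs
  · rw [transpose_mul, transpose_mul, diagonal_transpose, star_eq_conjTranspose,
      conjTranspose_eq_transpose_of_trivial, transpose_transpose, Matrix.mul_assoc]
  · exact transpose_zero

lemma matSqrt_mul_self {A : Matrix (Fin n) (Fin n) ℝ} (hA : A.PosSemidef) :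
    matSqrt A * matSqrt A = A := by
  rw [matSqrt, dif_pos hA, ← Unitary.conjStarAlgAut_apply (S := ℝ) hA.1.eigenvectorUnitary, ← map_mul,
    diagonal_mul_diagonal]
  conv_rhs => rw [hA.1.spectral_theorem]
  congr 2 with i
  simp [Real.mul_self_sqrt (hA.eigenvalues_nonneg i)]

lemma buresDist_le_frobNorm {U : Matrix (Fin n) (Fin n) ℝ} (hU : U ∈ orthogonalGroup (Fin n) ℝ)
    (A C : Matrix (Fin n) (Fin n) ℝ) :
    buresDist A C ≤ frobNorm (matSqrt A - matSqrt C * U) :=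
  csInf_le ⟨0, by rintro _ ⟨V, -, rfl⟩; exact Real.sqrt_nonneg _⟩ ⟨U, hU, rfl⟩

lemma exists_buresDist_eq (A C : Matrix (Fin n) (Fin n) ℝ) :
    ∃ U ∈ orthogonalGroup (Fin n) ℝ, buresDist A C = frobNorm (matSqrt A - matSqrt C * U) := by
  have hcont : Continuous fun U : Matrix (Fin n) (Fin n) ℝ =>
      frobNorm (matSqrt A - matSqrt C * U) := by
    simp only [frobNorm_eq_norm]
    fun_prop
  obtain ⟨U, hU, hmin⟩ := isCompact_unitaryGroup.exists_isMinOn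
    ⟨1, one_mem (orthogonalGroup (Fin n) ℝ)⟩ hcont.continuousOn
  refine ⟨U, hU, (buresDist_le_frobNorm hU A C).antisymm ?_⟩
  exact le_csInf ⟨_, U, hU, rfl⟩ fun _ ⟨V, hV, hr⟩ => hr ▸ hmin hV

lemma buresDist_self (A : Matrix (Fin n) (Fin n) ℝ) : buresDist A A = 0 := by
  refine le_antisymm ?_ (Real.sInf_nonneg ?_)
  · simpa [frobNorm] using buresDist_le_frobNorm (one_mem (orthogonalGroup (Fin n) ℝ)) A A
  · rintro _ ⟨V, -, rfl⟩
    exact Real.sqrt_nonneg _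

lemma buresDist_le_buresDist_swap (A C : Matrix (Fin n) (Fin n) ℝ) :
    buresDist C A ≤ buresDist A C := by
  obtain ⟨U, hU, hAC⟩ := exists_buresDist_eq A C
  calc buresDist C A ≤ frobNorm (matSqrt C - matSqrt A * Uᵀ) :=
        buresDist_le_frobNorm (transpose_mem_orthogonalGroup hU) C A
    _ = frobNorm ((matSqrt C * U - matSqrt A) * Uᵀ) := by
        rw [sub_mul, Matrix.mul_assoc, (mem_orthogonalGroup_iff _ ℝ).1 hU, Matrix.mul_one]
    _ = buresDist A C := by
        rw [frobNorm_mul_orthogonal _ (transpose_mem_orthogonalGroup hU), hAC,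
          frobNorm_eq_norm, frobNorm_eq_norm, norm_sub_rev]

lemma buresDist_comm (A C : Matrix (Fin n) (Fin n) ℝ) : buresDist A C = buresDist C A :=
  (buresDist_le_buresDist_swap C A).antisymm (buresDist_le_buresDist_swap A C)

lemma buresDist_triangle (A C E : Matrix (Fin n) (Fin n) ℝ) :
    buresDist A E ≤ buresDist A C + buresDist C E := by
  obtain ⟨U, hU, hAC⟩ := exists_buresDist_eq A C
  obtain ⟨V, hV, hCE⟩ := exists_buresDist_eq C E
  calc buresDist A E ≤ frobNorm (matSqrt A - matSqrt E * (V * U)) :=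
        buresDist_le_frobNorm (mul_mem hV hU) A E
    _ = frobNorm ((matSqrt A - matSqrt C * U) + (matSqrt C - matSqrt E * V) * U) := by
        rw [sub_mul, Matrix.mul_assoc, sub_add_sub_cancel]
    _ ≤ frobNorm (matSqrt A - matSqrt C * U) + frobNorm ((matSqrt C - matSqrt E * V) * U) := by
        simp only [frobNorm_eq_norm]
        exact norm_add_le _ _
    _ = buresDist A C + buresDist C E := by rw [frobNorm_mul_orthogonal _ hU, hAC, hCE]

lemma eq_of_buresDist_eq_zero {A C : Matrix (Fin n) (Fin n) ℝ} (hA : A.PosSemidef)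
    (hC : C.PosSemidef) (h : buresDist A C = 0) : A = C := by
  obtain ⟨U, hU, hAC⟩ := exists_buresDist_eq A C
  rw [h, frobNorm_eq_norm, eq_comm, norm_eq_zero, sub_eq_zero] at hAC
  calc A = matSqrt A * (matSqrt A)ᵀ := by rw [transpose_matSqrt, matSqrt_mul_self hA]
    _ = matSqrt C * (U * Uᵀ) * (matSqrt C)ᵀ := by
        rw [hAC, transpose_mul, Matrix.mul_assoc, Matrix.mul_assoc, Matrix.mul_assoc]
    _ = C := by
        rw [(mem_orthogonalGroup_iff _ ℝ).1 hU, Matrix.mul_one, transpose_matSqrt,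
          matSqrt_mul_self hC]

lemma buresDist_eq_zero_iff {A C : Matrix (Fin n) (Fin n) ℝ} (hA : A.PosSemidef)
    (hC : C.PosSemidef) : buresDist A C = 0 ↔ A = C :=
  ⟨eq_of_buresDist_eq_zero hA hC, fun h => h ▸ buresDist_self A⟩

end

/-- The Bures distance is a metric on the set of `n × n` real positive definite matrices:
it is symmetric, satisfies the triangle inequality, and vanishes exactly on the diagonal. -/
theorem stmt5 {n : ℕ}
    (d : {A : Matrix (Fin n) (Fin n) ℝ // A.PosDef} →
         {A : Matrix (Fin n) (Fin n) ℝ // A.PosDef} → ℝ)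
    (hd : ∀ A C : {A : Matrix (Fin n) (Fin n) ℝ // A.PosDef},
      d A C = buresDist (A : Matrix (Fin n) (Fin n) ℝ) (C : Matrix (Fin n) (Fin n) ℝ)) :
    (∀ A C : {A : Matrix (Fin n) (Fin n) ℝ // A.PosDef}, d A C = d C A) ∧
    (∀ A C E : {A : Matrix (Fin n) (Fin n) ℝ // A.PosDef}, d A E ≤ d A C + d C E) ∧
    (∀ A C : {A : Matrix (Fin n) (Fin n) ℝ // A.PosDef}, (d A C = 0 ↔ A = C)) := by
  refine ⟨fun A C => ?_, fun A C E => ?_, fun A C => ?_⟩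
  · rw [hd, hd, buresDist_comm]
  · simpa only [hd] using buresDist_triangle A.1 C.1 E.1
  · rw [hd, buresDist_eq_zero_iff A.2.posSemidef C.2.posSemidef, Subtype.ext_iff]
end

section
/- Let P and Q be Borel probability measures on ℝⁿ with finite second moments. Then ∫∫ ‖x − y‖² dP(x) dQ(y) − (1/2) ∫∫ ‖x − x'‖² dP(x) dP(x') − (1/2) ∫∫ ‖y − y'‖² dQ(y) dQ(y') = ‖∫ x dP(x) − ∫ y dQ(y)‖², where ‖·‖ is the Euclidean norm. Consequently, the squared energy distance with exponent q = 2 between P and Q equals the squared Euclidean distance between the mean of P and the mean of Q. -/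
/-!
Expanding `‖x - y‖² = ‖x‖² - 2⟪x, y⟫ + ‖y‖²` and integrating, the cross term of each double
integral only sees the means, so `∫∫ ‖x - y‖² dμ dν = m₂(μ) - 2⟪mean μ, mean ν⟫ + m₂(ν)`.
In the combination defining the energy distance the second moments cancel, leaving
`‖mean P‖² - 2⟪mean P, mean Q⟫ + ‖mean Q‖² = ‖mean P - mean Q‖²`.
-/

open MeasureTheory

section

variable {E : Type*} [NormedAddCommGroup E] [MeasurableSpace E]

theorem integrable_id_of_integrable_norm_sq [OpensMeasurableSpace E] [SecondCountableTopology E]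
    {μ : Measure E} [IsFiniteMeasure μ] (hμ : Integrable (fun x => ‖x‖ ^ 2) μ) :
    Integrable (fun x => x) μ :=
  ((memLp_two_iff_integrable_sq_norm aestronglyMeasurable_id).2 hμ).integrable one_le_two

variable [InnerProductSpace ℝ E] [CompleteSpace E]

theorem integral_norm_sub_sq (x : E) {ν : Measure E} [IsProbabilityMeasure ν]
    (hν₁ : Integrable (fun y => y) ν) (hν₂ : Integrable (fun y => ‖y‖ ^ 2) ν) :
    ∫ y, ‖x - y‖ ^ 2 ∂ν = ‖x‖ ^ 2 - 2 * inner ℝ x (∫ y, y ∂ν) + ∫ y, ‖y‖ ^ 2 ∂ν := by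
  have hinner : Integrable (fun y => 2 * inner ℝ x y) ν := (hν₁.const_inner x).const_mul 2
  simp_rw [norm_sub_sq_real]
  rw [integral_add ((integrable_const _).sub' hinner) hν₂,
    integral_sub (integrable_const _) hinner, integral_const_mul, integral_inner hν₁]
  simp

theorem integral_integral_norm_sub_sq {μ ν : Measure E} [IsProbabilityMeasure μ]
    [IsProbabilityMeasure ν] (hμ₁ : Integrable (fun x => x) μ)
    (hμ₂ : Integrable (fun x => ‖x‖ ^ 2) μ) (hν₁ : Integrable (fun y => y) ν)
    (hν₂ : Integrable (fun y => ‖y‖ ^ 2) ν) :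
    ∫ x, ∫ y, ‖x - y‖ ^ 2 ∂ν ∂μ
      = ∫ x, ‖x‖ ^ 2 ∂μ - 2 * inner ℝ (∫ x, x ∂μ) (∫ y, y ∂ν) + ∫ y, ‖y‖ ^ 2 ∂ν := by
  have hinner : Integrable (fun x => 2 * inner ℝ x (∫ y, y ∂ν)) μ := by
    simpa only [real_inner_comm] using (hμ₁.const_inner (𝕜 := ℝ) (∫ y, y ∂ν)).const_mul (2 : ℝ)
  simp_rw [integral_norm_sub_sq _ hν₁ hν₂]
  rw [integral_add (hμ₂.sub' hinner) (integrable_const _), integral_sub hμ₂ hinner,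
    integral_const_mul]
  have hmean : ∫ x, inner ℝ x (∫ y, y ∂ν) ∂μ = inner ℝ (∫ x, x ∂μ) (∫ y, y ∂ν) := by
    simpa only [real_inner_comm _ (∫ y, y ∂ν)] using integral_inner (𝕜 := ℝ) hμ₁ (∫ y, y ∂ν)
  simp [hmean]

end

/-- For Borel probability measures `P, Q` on `ℝⁿ` with finite second moments,
`E‖X − Y‖² − (1/2)E‖X − X'‖² − (1/2)E‖Y − Y'‖² = ‖E[X] − E[Y]‖²`; i.e. the squared
energy distance with exponent `q = 2` equals the squared Euclidean distance between
the means. -/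
theorem stmt8 {n : ℕ} (P Q : Measure (EuclideanSpace ℝ (Fin n)))
    [IsProbabilityMeasure P] [IsProbabilityMeasure Q]
    (hP : Integrable (fun x => ‖x‖ ^ 2) P)
    (hQ : Integrable (fun y => ‖y‖ ^ 2) Q) :
    (∫ x, ∫ y, ‖x - y‖ ^ 2 ∂Q ∂P)
      - (1 / 2) * (∫ x, ∫ x', ‖x - x'‖ ^ 2 ∂P ∂P)
      - (1 / 2) * (∫ y, ∫ y', ‖y - y'‖ ^ 2 ∂Q ∂Q)
      = ‖(∫ x, x ∂P) - ∫ y, y ∂Q‖ ^ 2 := by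
  have hP₁ := integrable_id_of_integrable_norm_sq hP
  have hQ₁ := integrable_id_of_integrable_norm_sq hQ
  rw [integral_integral_norm_sub_sq hP₁ hP hQ₁ hQ, integral_integral_norm_sub_sq hP₁ hP hP₁ hP,
    integral_integral_norm_sub_sq hQ₁ hQ hQ₁ hQ, norm_sub_sq_real, real_inner_self_eq_norm_sq,
    real_inner_self_eq_norm_sq]
  ring
end

section
/- Let 0 < q < 2, let x₁, …, x_N and y₁, …, y_N be vectors in ℝⁿ, and let T₀, T' be maps from ℝⁿ to ℝⁿ with ‖y_i − T₀ x_i‖ > 0 for all i. Suppose T' satisfies the weighted least-squares improvement condition Σ_{i=1}^N w_i ‖y_i − T' x_i‖² ≤ Σ_{i=1}^N w_i ‖y_i − T₀ x_i‖², where w_i := ‖y_i − T₀ x_i‖^{q − 2}. Then Σ_{i=1}^N ‖y_i − T' x_i‖^q ≤ Σ_{i=1}^N ‖y_i − T₀ x_i‖^q, i.e., the iteratively reweighted least squares update never increases the objective f(T) = Σ_i ‖y_i − T x_i‖^q. -/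
open Real in
lemma stmt13_key {q a b : ℝ} (hq0 : 0 < q) (hq2 : q < 2) (ha : 0 ≤ a) (hb : 0 < b) :
    a ^ q ≤ b ^ q + (q/2) * (b ^ (q-2) * a^2 - b ^ (q-2) * b^2) := by
  have hb2 : (0:ℝ) < b^2 := by positivity
  have hs1 : -1 ≤ a^2/b^2 - 1 := by
    have : 0 ≤ a^2/b^2 := by positivity
    linarith
  have hber := rpow_one_add_le_one_add_mul_self hs1 (by linarith : 0 ≤ q/2)
    (by linarith : q/2 ≤ 1)
  have h1s : 1 + (a^2/b^2 - 1) = a^2/b^2 := by ring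
  rw [h1s] at hber
  have hbq : 0 < b ^ q := Real.rpow_pos_of_pos hb q
  have h2 : ((2:ℕ):ℝ) = (2:ℝ) := by norm_num
  have hpow : (a^2/b^2) ^ (q/2) = a^q / b^q := by
    rw [Real.div_rpow (by positivity) (by positivity),
        ← Real.rpow_natCast a 2, ← Real.rpow_natCast b 2,
        ← Real.rpow_mul ha, ← Real.rpow_mul hb.le, h2,
        show 2*(q/2)=q by ring]
  rw [hpow] at hber
  have hbq2 : b ^ (q-2) = b^q / b^2 := by
    rw [Real.rpow_sub hb, ← Real.rpow_natCast b 2, h2]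
  rw [hbq2]
  have h := (div_le_iff₀ hbq).mp hber
  calc a ^ q ≤ (1 + q / 2 * (a ^ 2 / b ^ 2 - 1)) * b ^ q := h
    _ = b ^ q + q / 2 * (b ^ q / b ^ 2 * a ^ 2 - b ^ q / b ^ 2 * b ^ 2) := by
        field_simp

/-- Descent property of iteratively reweighted least squares: if `T'` improves the weighted
least-squares surrogate with weights `wᵢ = ‖yᵢ − T₀ xᵢ‖^{q−2}`, then it does not increase
the objective `f(T) = Σᵢ ‖yᵢ − T xᵢ‖^q`, for `0 < q < 2`. -/
theorem stmt13 {n N : ℕ} (q : ℝ) (hq0 : 0 < q) (hq2 : q < 2)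
    (x y : Fin N → EuclideanSpace ℝ (Fin n))
    (T₀ T' : EuclideanSpace ℝ (Fin n) → EuclideanSpace ℝ (Fin n))
    (hT₀ : ∀ i, 0 < ‖y i - T₀ (x i)‖)
    (himp : ∑ i, ‖y i - T₀ (x i)‖ ^ (q - 2) * ‖y i - T' (x i)‖ ^ 2 ≤
        ∑ i, ‖y i - T₀ (x i)‖ ^ (q - 2) * ‖y i - T₀ (x i)‖ ^ 2) :
    ∑ i, ‖y i - T' (x i)‖ ^ q ≤ ∑ i, ‖y i - T₀ (x i)‖ ^ q := by
  have hkey : ∀ i : Fin N, ‖y i - T' (x i)‖ ^ q ≤ ‖y i - T₀ (x i)‖ ^ q +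
      (q/2) * (‖y i - T₀ (x i)‖ ^ (q-2) * ‖y i - T' (x i)‖ ^ 2 -
        ‖y i - T₀ (x i)‖ ^ (q-2) * ‖y i - T₀ (x i)‖ ^ 2) :=
    fun i => stmt13_key hq0 hq2 (norm_nonneg _) (hT₀ i)
  calc ∑ i, ‖y i - T' (x i)‖ ^ q
      ≤ ∑ i, (‖y i - T₀ (x i)‖ ^ q +
          (q/2) * (‖y i - T₀ (x i)‖ ^ (q-2) * ‖y i - T' (x i)‖ ^ 2 -
            ‖y i - T₀ (x i)‖ ^ (q-2) * ‖y i - T₀ (x i)‖ ^ 2)) :=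
        Finset.sum_le_sum fun i _ => hkey i
    _ = ∑ i, ‖y i - T₀ (x i)‖ ^ q +
          (q/2) * ((∑ i, ‖y i - T₀ (x i)‖ ^ (q-2) * ‖y i - T' (x i)‖ ^ 2) -
            ∑ i, ‖y i - T₀ (x i)‖ ^ (q-2) * ‖y i - T₀ (x i)‖ ^ 2) := by
        rw [Finset.sum_add_distrib, ← Finset.mul_sum, Finset.sum_sub_distrib]
    _ ≤ ∑ i, ‖y i - T₀ (x i)‖ ^ q := by nlinarith
end
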